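/- Let k ≥ 1 be an integer and let H be a graph on n ≥ k vertices that is saturated with respect to the property χ_{>k} of having chromatic number at least k+1 (i.e., χ(H) ≤ k, but χ(H + e) ≥ k+1 for every non-edge e of H). Then H is a complete k-partite graph: there is a partition of the vertex set of H into k nonempty independent sets such that every two vertices lying in different parts are adjacent. -/

import Mathlib

/-!
A `k`-coloring of `H` exists because `H` has chromatic number at most `k`. Any two distinct
non-adjacent vertices must receive the same color: otherwise the coloring would stay proper after
joining them, against saturation. Every color is used: `H` has at least `k` vertices, so if a
color were missing, two vertices would share a color, and recoloring one of them with the missing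
color would give a coloring separating two non-adjacent vertices. The color classes are therefore
the `k` parts of a complete `k`-partite graph.
-/

open SimpleGraph

/-- The graph obtained from `G` by adding the edge `e`. -/
def addEdge {V : Type*} (G : SimpleGraph V) (e : Sym2 V) : SimpleGraph V :=
  G ⊔ SimpleGraph.fromEdgeSet {e}

/-- `G` is saturated with respect to the (monotone increasing) property `P`:
`G` does not satisfy `P`, but adding any non-edge of `G` produces a graph satisfying `P`. -/
def saturatedWrt {V : Type*} (P : SimpleGraph V → Prop) (G : SimpleGraph V) : Prop :=
  ¬ P G ∧ ∀ e : Sym2 V, ¬ e.IsDiag → e ∉ G.edgeSet → P (addEdge G e)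

/-- The property of having chromatic number at least `k + 1`. -/
def chiGt {V : Type*} (k : ℕ) (G : SimpleGraph V) : Prop :=
  ((k : ℕ∞) + 1) ≤ G.chromaticNumber

section Saturation

variable {V : Type*} {G : SimpleGraph V} {k : ℕ}

lemma addEdge_adj {u v x y : V} :
    (addEdge G s(u, v)).Adj x y ↔ G.Adj x y ∨ (s(x, y) = s(u, v) ∧ x ≠ y) := by
  simp [addEdge]

lemma chiGt_iff_not_colorable : chiGt k G ↔ ¬ G.Colorable k := by
  rw [chiGt, ENat.add_one_le_iff (ENat.natCast_ne_top k), ← chromaticNumber_le_iff_colorable,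
    not_le]

lemma colorable_addEdge_of_coloring {α : Type*} [Fintype α] (C : G.Coloring α) {u v : V}
    (h : C u ≠ C v) :
    (addEdge G s(u, v)).Colorable (Fintype.card α) := by
  refine Coloring.colorable (Coloring.mk C fun {x y} hxy => ?_)
  rcases addEdge_adj.mp hxy with hG | ⟨hxy, -⟩
  · exact C.valid hG
  · rcases Sym2.eq_iff.mp hxy with ⟨rfl, rfl⟩ | ⟨rfl, rfl⟩
    exacts [h, h.symm]

lemma saturatedWrt.colorable (hsat : saturatedWrt (chiGt k) G) : G.Colorable k :=
  not_not.mp (chiGt_iff_not_colorable.not.mp hsat.1)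

lemma saturatedWrt.coloring_eq_of_not_adj (hsat : saturatedWrt (chiGt k) G)
    (C : G.Coloring (Fin k)) {u v : V} (huv : u ≠ v) (hna : ¬ G.Adj u v) : C u = C v := by
  by_contra hne
  have hchi : chiGt k (addEdge G s(u, v)) :=
    hsat.2 s(u, v) (by simpa using huv) (by simpa using hna)
  exact chiGt_iff_not_colorable.mp hchi (by simpa using colorable_addEdge_of_coloring C hne)

def Coloring.updateOfForallNe [DecidableEq V] {α : Type*} (C : G.Coloring α) {m : α}
    (hm : ∀ z, C z ≠ m) (u : V) : G.Coloring α :=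
  Coloring.mk (Function.update C u m) fun {x y} hxy => by
    by_cases hx : x = u <;> by_cases hy : y = u
    · exact (G.irrefl (hx ▸ hy ▸ hxy)).elim
    · simpa [hx, hy] using (hm y).symm
    · simpa [hx, hy] using hm x
    · simpa [hx, hy] using C.valid hxy

lemma saturatedWrt.coloring_surjective [Finite V] (hsat : saturatedWrt (chiGt k) G)
    (hk : k ≤ Nat.card V) (C : G.Coloring (Fin k)) : Function.Surjective C := by
  classical
  by_contra hns
  obtain ⟨m, hm⟩ : ∃ m, ∀ z, C z ≠ m := by simpa [Function.Surjective] using hns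
  obtain ⟨u, v, hCuv, huv⟩ : ∃ u v, C u = C v ∧ u ≠ v := by
    have hnot_inj : ¬ Function.Injective C := fun hinj =>
      hns (hinj.bijective_of_nat_card_le (by simpa using hk)).2
    simpa [Function.Injective] using hnot_inj
  have hna : ¬ G.Adj u v := fun h => C.valid h hCuv
  have hupd : Function.update C u m u = Function.update C u m v :=
    hsat.coloring_eq_of_not_adj (Coloring.updateOfForallNe C hm u) huv hna
  rw [Function.update_self, Function.update_of_ne huv.symm] at hupd
  exact hm v hupd.symm

end Saturation

theorem statement_9_general (k n : ℕ) (hn : k ≤ n)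
    (H : SimpleGraph (Fin n)) (hsat : saturatedWrt (chiGt k) H) :
    ∃ c : Fin n → Fin k, Function.Surjective c ∧
      ∀ u v : Fin n, H.Adj u v ↔ c u ≠ c v := by
  obtain ⟨C⟩ := hsat.colorable
  refine ⟨C, hsat.coloring_surjective (by simpa using hn) C,
    fun u v => ⟨C.valid, fun hne => ?_⟩⟩
  by_contra hna
  have huv : u ≠ v := fun huv => hne (congrArg C huv)
  exact hne (hsat.coloring_eq_of_not_adj C huv hna)

/-- For `k ≥ 1` and `n ≥ k`, every graph on `n` vertices saturated with respect to the
property of having chromatic number at least `k + 1` is complete `k`-partite: there is a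
partition of its vertices into `k` nonempty independent sets (the fibers of a surjection
onto `Fin k`) such that two vertices are adjacent iff they lie in different parts. -/
theorem statement_9 (k n : ℕ) (hk : 1 ≤ k) (hn : k ≤ n)
    (H : SimpleGraph (Fin n)) (hsat : saturatedWrt (chiGt k) H) :
    ∃ c : Fin n → Fin k, Function.Surjective c ∧
      ∀ u v : Fin n, H.Adj u v ↔ c u ≠ c v :=
  statement_9_general k n hn H hsat
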